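/- For an integer a \ge 4, T(a-2,1,1) = (1/2) T(1,1,a-2) + \zeta(a). -/

import Mathlib

/-!
Partial fractions `1 / (m (n + m)) = (1 / n) (1 / m - 1 / (n + m))` telescope the inner sum of
`T(p,1,1)` to `H_n / n^(p+1)`. Writing `H_n = ∑_{k ≤ n} 1 / k` and summing the triangle `k ≤ n`
first along the diagonal `k = n`, then along `n = j + k`, gives `ζ(p+2) + T(0,1,p+1)`.
On the other side, `1 / (n m) = (1 / n + 1 / m) / (n + m)` splits `T(1,1,p)` into
`T(0,1,p+1) + T(1,0,p+1)`, which is `2 T(0,1,p+1)` by symmetry.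
-/

/-- The Tornheim double series with natural number exponents. -/
noncomputable def tornheimN (a b c : ℕ) : ℝ :=
  ∑' n : ℕ+, ∑' m : ℕ+,
    1 / (((n : ℕ) : ℝ) ^ a * ((m : ℕ) : ℝ) ^ b * (((n : ℕ) + (m : ℕ) : ℕ) : ℝ) ^ c)

open Finset Filter Topology

theorem hasSum_sub_add_of_antitone {f : ℕ → ℝ} (hf : Antitone f)
    (hf0 : Tendsto f atTop (𝓝 0)) (n : ℕ) :
    HasSum (fun m ↦ f m - f (m + n)) (∑ k ∈ range n, f k) := by
  induction n with
  | zero => simp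
  | succ n ih =>
    have step : HasSum (fun m ↦ f (m + n) - f (m + n + 1)) (f n) := by
      rw [hasSum_iff_tendsto_nat_of_nonneg fun m ↦ sub_nonneg.2 (hf (by omega))]
      have hpartial (N : ℕ) : ∑ m ∈ range N, (f (m + n) - f (m + n + 1)) = f n - f (N + n) := by
        simpa [add_right_comm] using sum_range_sub' (fun m ↦ f (m + n)) N
      simpa [hpartial] using tendsto_const_nhds.sub (hf0.comp (tendsto_add_atTop_nat n))
    convert ih.add step using 1
    · ext m; ring_nf
    · rw [sum_range_succ]

theorem hasSum_one_div_sub_one_div_add_pnat (n : ℕ) :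
    HasSum (fun m : ℕ+ ↦ 1 / (m : ℝ) - 1 / ((m : ℝ) + n)) (harmonic n) := by
  have hanti : Antitone fun k : ℕ ↦ 1 / ((k : ℝ) + 1) := fun k l hkl ↦
    one_div_le_one_div_of_le (by positivity) (by gcongr)
  rw [hasSum_pnat_iff_hasSum_succ (f := fun m : ℕ ↦ 1 / (m : ℝ) - 1 / ((m : ℝ) + n))]
  convert hasSum_sub_add_of_antitone hanti tendsto_one_div_add_atTop_nhds_zero_nat n using 1
  · ext m; push_cast; ring_nf
  · simp [harmonic]

theorem tsum_pnat_ite_le_one_div_eq_harmonic (n : ℕ+) :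
    ∑' k : ℕ+, (if k ≤ n then 1 / (k : ℝ) else 0) = harmonic n := by
  simp_rw [← PNat.coe_le_coe]
  -- the `k = 0` term of the sum over `ℕ` is `1 / 0 = 0`
  rw [tsum_pnat_eq_tsum_of_eq_zero (f := fun k : ℕ ↦ if k ≤ n then 1 / (k : ℝ) else 0) (by simp),
    tsum_eq_sum (s := Icc 1 (n : ℕ)), harmonic_eq_sum_Icc]
  · push_cast
    refine sum_congr rfl fun k hk ↦ ?_
    rw [if_pos (mem_Icc.1 hk).2, one_div]
  · intro k hk
    rcases Nat.eq_zero_or_pos k with rfl | hk0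
    · simp
    · simp only [mem_Icc, not_and, not_le] at hk
      rw [if_neg (hk hk0).not_ge]

theorem summable_one_div_pnat_pow {k : ℕ} (hk : 2 ≤ k) :
    Summable fun n : ℕ+ ↦ 1 / (n : ℝ) ^ k :=
  summable_pnat_iff_summable_nat.2 (Real.summable_one_div_nat_pow.2 hk)

theorem riemannZeta_natCast_eq_tsum_pnat {k : ℕ} (hk : 1 < k) :
    riemannZeta k = ((∑' n : ℕ+, 1 / (n : ℝ) ^ k : ℝ) : ℂ) := by
  rw [zeta_nat_eq_tsum_of_gt_one hk, Complex.ofReal_tsum,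
    ← tsum_pnat_eq_tsum_of_eq_zero (by simp [Nat.ne_zero_of_lt hk])]
  push_cast
  rfl

theorem hasSum_ite_snd_le_pnat {α : Type*} [AddCommMonoid α] [TopologicalSpace α] [ContinuousAdd α]
    {F : ℕ+ → ℕ+ → α} {x y : α} (hdiag : HasSum (fun n ↦ F n n) x)
    (hshear : HasSum (fun q : ℕ+ × ℕ+ ↦ F (q.1 + q.2) q.2) y) :
    HasSum (fun q : ℕ+ × ℕ+ ↦ if q.2 ≤ q.1 then F q.1 q.2 else 0) (x + y) := by
  have hD : HasSum (fun q : ℕ+ × ℕ+ ↦ if q.1 = q.2 then F q.1 q.2 else 0) x := by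
    refine (Function.Injective.hasSum_iff (g := fun n : ℕ+ ↦ (n, n))
      (fun m n h ↦ (Prod.ext_iff.1 h).1) fun q hq ↦ ?_).1 (by simpa [Function.comp_def] using hdiag)
    rw [if_neg]
    rintro h
    exact hq ⟨q.1, Prod.ext rfl h⟩
  have hU : HasSum (fun q : ℕ+ × ℕ+ ↦ if q.2 < q.1 then F q.1 q.2 else 0) y := by
    refine (Function.Injective.hasSum_iff (g := fun q : ℕ+ × ℕ+ ↦ (q.1 + q.2, q.2))
      (fun q r h ↦ ?_) fun q hq ↦ ?_).1 (by simpa [Function.comp_def, PNat.lt_add_left] using hshear)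
    · obtain ⟨h₁, h₂⟩ := Prod.ext_iff.1 h
      simp only at h₁ h₂
      rw [h₂] at h₁
      exact Prod.ext (add_right_cancel h₁) h₂
    · rw [if_neg]
      intro h
      exact hq ⟨(q.1 - q.2, q.2), Prod.ext (by simp [add_comm, PNat.add_sub_of_lt h]) rfl⟩
  convert hD.add hU using 1
  ext q
  rcases lt_trichotomy q.1 q.2 with h | h | h
  · simp [h.not_ge, h.ne, h.not_gt]
  · simp [h]
  · simp [h.le, h.ne', h]

noncomputable def tornheimTerm (a b c : ℕ) (q : ℕ+ × ℕ+) : ℝ :=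
  1 / ((q.1 : ℝ) ^ a * (q.2 : ℝ) ^ b * ((q.1 : ℝ) + q.2) ^ c)

section TornheimTerm

variable {a b c : ℕ}

theorem tornheimN_eq_tsum_tsum :
    tornheimN a b c = ∑' n, ∑' m, tornheimTerm a b c (n, m) := by
  simp only [tornheimN, tornheimTerm, Nat.cast_add]

theorem tornheimTerm_nonneg (q : ℕ+ × ℕ+) : 0 ≤ tornheimTerm a b c q := by
  unfold tornheimTerm
  positivity

theorem summable_tornheimTerm {i j : ℕ} (hij : i + j ≤ c) (ha : 2 ≤ a + i) (hb : 2 ≤ b + j) :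
    Summable (tornheimTerm a b c) := by
  refine Summable.of_nonneg_of_le tornheimTerm_nonneg (fun q ↦ ?_)
    ((summable_one_div_pnat_pow ha).mul_of_nonneg (summable_one_div_pnat_pow hb)
      (fun _ ↦ by positivity) fun _ ↦ by positivity)
  have hx : (1 : ℝ) ≤ q.1 := Nat.one_le_cast.2 q.1.pos
  have hy : (1 : ℝ) ≤ q.2 := Nat.one_le_cast.2 q.2.pos
  rw [tornheimTerm, div_mul_div_comm, one_mul]
  refine one_div_le_one_div_of_le (by positivity) ?_
  calc (q.1 : ℝ) ^ (a + i) * (q.2 : ℝ) ^ (b + j)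
      = (q.1 : ℝ) ^ a * (q.2 : ℝ) ^ b * ((q.1 : ℝ) ^ i * (q.2 : ℝ) ^ j) := by ring
    _ ≤ (q.1 : ℝ) ^ a * (q.2 : ℝ) ^ b * (((q.1 : ℝ) + q.2) ^ i * ((q.1 : ℝ) + q.2) ^ j) := by
        gcongr <;> linarith
    _ = (q.1 : ℝ) ^ a * (q.2 : ℝ) ^ b * ((q.1 : ℝ) + q.2) ^ (i + j) := by ring
    _ ≤ (q.1 : ℝ) ^ a * (q.2 : ℝ) ^ b * ((q.1 : ℝ) + q.2) ^ c := by
        gcongr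
        linarith

theorem tornheimN_eq_tsum (h : Summable (tornheimTerm a b c)) :
    tornheimN a b c = ∑' q, tornheimTerm a b c q := by
  rw [tornheimN_eq_tsum_tsum, h.tsum_prod]

theorem tornheimTerm_swap (q : ℕ+ × ℕ+) : tornheimTerm a b c q.swap = tornheimTerm b a c q := by
  simp only [tornheimTerm, Prod.fst_swap, Prod.snd_swap]
  ring

theorem tornheimN_comm (h : Summable (tornheimTerm a b c)) : tornheimN b a c = tornheimN a b c := by
  have h' : Summable (tornheimTerm b a c) := by
    simpa [Function.comp_def, tornheimTerm_swap] using h.comp_injective Prod.swap_injective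
  rw [tornheimN_eq_tsum h, tornheimN_eq_tsum h', ← (Equiv.prodComm _ _).tsum_eq]
  simp [tornheimTerm_swap]

theorem tornheimTerm_succ_succ (q : ℕ+ × ℕ+) :
    tornheimTerm (a + 1) (b + 1) c q
      = tornheimTerm a (b + 1) (c + 1) q + tornheimTerm (a + 1) b (c + 1) q := by
  simp only [tornheimTerm]
  field_simp
  ring

theorem tornheimN_succ_succ (h₁ : Summable (tornheimTerm a (b + 1) (c + 1)))
    (h₂ : Summable (tornheimTerm (a + 1) b (c + 1))) :
    tornheimN (a + 1) (b + 1) c = tornheimN a (b + 1) (c + 1) + tornheimN (a + 1) b (c + 1) := by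
  have h : Summable (tornheimTerm (a + 1) (b + 1) c) := by
    simpa only [← Pi.add_def, funext tornheimTerm_succ_succ] using h₁.add h₂
  rw [tornheimN_eq_tsum h, tornheimN_eq_tsum h₁, tornheimN_eq_tsum h₂, ← h₁.tsum_add h₂]
  simp only [tornheimTerm_succ_succ]

end TornheimTerm

theorem tornheimN_one_one_eq_two_mul {p : ℕ} (hp : 2 ≤ p) :
    tornheimN 1 1 p = 2 * tornheimN 0 1 (p + 1) := by
  rw [tornheimN_succ_succ (summable_tornheimTerm (i := 2) (j := 1) (by omega) le_rfl le_rfl)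
      (summable_tornheimTerm (i := 1) (j := 2) (by omega) le_rfl le_rfl),
    tornheimN_comm (summable_tornheimTerm (i := 2) (j := 1) (by omega) le_rfl le_rfl)]
  ring

theorem tsum_tornheimTerm_one_one (p : ℕ) (n : ℕ+) :
    ∑' m, tornheimTerm p 1 1 (n, m) = harmonic n / (n : ℝ) ^ (p + 1) := by
  have hterm (m : ℕ+) :
      tornheimTerm p 1 1 (n, m) = (1 / (m : ℝ) - 1 / ((m : ℝ) + n)) / (n : ℝ) ^ (p + 1) := by
    simp only [tornheimTerm]
    field_simp
    ring
  rw [tsum_congr hterm, tsum_div_const, (hasSum_one_div_sub_one_div_add_pnat n).tsum_eq]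

theorem tornheimN_eq_tsum_harmonic_div (p : ℕ) :
    tornheimN p 1 1 = ∑' n : ℕ+, harmonic n / (n : ℝ) ^ (p + 1) := by
  rw [tornheimN_eq_tsum_tsum]
  exact tsum_congr (tsum_tornheimTerm_one_one p)

theorem tsum_harmonic_div_pow_eq {p : ℕ} (hp : 2 ≤ p) :
    ∑' n : ℕ+, harmonic n / (n : ℝ) ^ (p + 1)
      = ∑' n : ℕ+, 1 / (n : ℝ) ^ (p + 2) + tornheimN 0 1 (p + 1) := by
  set F : ℕ+ → ℕ+ → ℝ := fun n k ↦ 1 / ((n : ℝ) ^ (p + 1) * k)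
  have hdiag : HasSum (fun n ↦ F n n) (∑' n : ℕ+, 1 / (n : ℝ) ^ (p + 2)) := by
    convert (summable_one_div_pnat_pow (by omega : 2 ≤ p + 2)).hasSum using 2 with n
    simp only [F, pow_succ]
  have hs : Summable (tornheimTerm 0 1 (p + 1)) :=
    summable_tornheimTerm (i := 2) (j := 1) (by omega) le_rfl le_rfl
  have hshear : HasSum (fun q : ℕ+ × ℕ+ ↦ F (q.1 + q.2) q.2) (tornheimN 0 1 (p + 1)) := by
    rw [tornheimN_eq_tsum hs]
    convert hs.hasSum using 2 with q
    simp only [F, tornheimTerm, PNat.add_coe, Nat.cast_add]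
    ring
  have hG := hasSum_ite_snd_le_pnat hdiag hshear
  rw [← hG.tsum_eq, hG.summable.tsum_prod]
  refine tsum_congr fun n ↦ ?_
  rw [← tsum_pnat_ite_le_one_div_eq_harmonic, ← tsum_div_const]
  refine tsum_congr fun k ↦ ?_
  split_ifs
  · simp only [F]
    ring
  · rw [zero_div]

theorem tornheim_a21 (a : ℕ) (ha : 4 ≤ a) :
    ((tornheimN (a - 2) 1 1 : ℝ) : ℂ)
      = (1 / 2) * ((tornheimN 1 1 (a - 2) : ℝ) : ℂ) + riemannZeta a := by
  obtain ⟨p, rfl⟩ : ∃ p, a = p + 2 := ⟨a - 2, by omega⟩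
  have hp : 2 ≤ p := by omega
  rw [Nat.add_sub_cancel, tornheimN_eq_tsum_harmonic_div, tsum_harmonic_div_pow_eq hp,
    tornheimN_one_one_eq_two_mul hp, riemannZeta_natCast_eq_tsum_pnat (by omega)]
  push_cast
  ring
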